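/- Let d ≥ 2, let Λ ⊆ K̃^d be a lattice, and let v⁽¹⁾,…,v⁽ᵈ⁾ ∈ Λ be linearly independent vectors over K̃ with ‖v⁽ⁱ⁾‖ = λ_i(Λ) for each i = 1,…,d (a set of successive minima vectors). Then Λ is spanned over R by v⁽¹⁾,…,v⁽ᵈ⁾, i.e. Λ = R·v⁽¹⁾ + … + R·v⁽ᵈ⁾. -/

import Mathlib

noncomputable section

open scoped Classical

variable (Fq : Type) [Field Fq] [Fintype Fq]

/-- `K̃ = 𝔽_q((x⁻¹))`, realized as formal Laurent series in `t = x⁻¹`. -/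
abbrev Kt := LaurentSeries Fq

/-- The element `x` of `K̃` (the inverse of the Laurent series variable). -/
def Kx : Kt Fq := HahnSeries.single (-1 : ℤ) 1

/-- Absolute value `|f| = q^{deg f}`, i.e. `q^{-order f}` in terms of `t = x⁻¹`. -/
def Kabs (f : Kt Fq) : ℝ := if f = 0 then 0 else (Fintype.card Fq : ℝ) ^ (-f.order)

/-- The ring embedding of `R = 𝔽_q[x]` into `K̃`. -/
def polyK : Polynomial Fq →+* Kt Fq := (Polynomial.aeval (Kx Fq)).toRingHom

/-- Sup norm on `K̃^d`. -/
def vnorm {d : ℕ} (v : Fin d → Kt Fq) : ℝ := ⨆ i, Kabs Fq (v i)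

/-- The lattice `g·R^d`. -/
def lattice {d : ℕ} (g : Matrix (Fin d) (Fin d) (Kt Fq)) : Set (Fin d → Kt Fq) :=
  {v | ∃ c : Fin d → Polynomial Fq, v = g.mulVec fun j => polyK Fq (c j)}

/-- `i`-th successive minimum of `Λ` with respect to a norm `nrm`: the least `r > 0` such that
`Λ` contains `i` linearly independent vectors of norm at most `r`. -/
def minimaN {d : ℕ} (nrm : (Fin d → Kt Fq) → ℝ) (Λ : Set (Fin d → Kt Fq)) (i : ℕ) : ℝ :=
  sInf {r : ℝ | 0 < r ∧ ∃ v : Fin i → Fin d → Kt Fq,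
    (∀ j, v j ∈ Λ) ∧ LinearIndependent (Kt Fq) v ∧ ∀ j, nrm (v j) ≤ r}

/-- `i`-th successive minimum with respect to the sup norm. -/
def minima {d : ℕ} (Λ : Set (Fin d → Kt Fq)) (i : ℕ) : ℝ := minimaN Fq (vnorm Fq) Λ i

/-- Covering radius of `Λ` with respect to the norm `nrm`. -/
def covRad {d : ℕ} (nrm : (Fin d → Kt Fq) → ℝ) (Λ : Set (Fin d → Kt Fq)) : ℝ :=
  ⨆ w : Fin d → Kt Fq, ⨅ u : Λ, nrm (w - u.1)

/-- Length of the shortest nonzero vector of `Λ`. -/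
def ell {d : ℕ} (Λ : Set (Fin d → Kt Fq)) : ℝ :=
  sInf {r : ℝ | ∃ v ∈ Λ, v ≠ 0 ∧ vnorm Fq v = r}

/-- `Λ` is well rounded: it contains `d` linearly independent vectors of norm `ℓ(Λ)`. -/
def IsWellRounded {d : ℕ} (Λ : Set (Fin d → Kt Fq)) : Prop :=
  ∃ v : Fin d → Fin d → Kt Fq, (∀ j, v j ∈ Λ) ∧ LinearIndependent (Kt Fq) v ∧
    ∀ j, vnorm Fq (v j) = ell Fq Λ

/-- The multiplicative "norm" `N(v) = ∏ |v i|`. -/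
def Nprod {d : ℕ} (v : Fin d → Kt Fq) : ℝ := ∏ i, Kabs Fq (v i)

/-- The Minkowski function `μ(Λ) = sup_w inf_{u ∈ Λ} N(w - u)`. -/
def mink {d : ℕ} (Λ : Set (Fin d → Kt Fq)) : ℝ :=
  ⨆ w : Fin d → Kt Fq, ⨅ u : Λ, Nprod Fq (w - u.1)

/-!
Write `w ∈ Λ` as `∑ cᵢ vᵢ` over `K̃` and split each `cᵢ` into its polynomial part and a
fractional part `εᵢ` with `|εᵢ| < 1`; then `w' = ∑ εᵢ vᵢ ∈ Λ`, and it suffices to show that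
all `εᵢ` vanish.
Otherwise let `L` be the largest `‖vₖ‖` with `εₖ ≠ 0` and `m` the first index with `‖vₘ‖ ≥ L`.
All absolute values are integral powers of `q`, so `‖w'‖ ≤ L/q` by the ultrametric inequality
and `‖vⱼ‖ ≤ L/q` for `j < m`. Since `εₖ ≠ 0` for some `k ≥ m`, the vectors `v₀, …, v_{m-1}, w'`
are independent, whence `λ_{m+1} ≤ L/q < L ≤ ‖vₘ‖ = λ_{m+1}`.
-/

lemma one_lt_card_real : (1 : ℝ) < Fintype.card Fq := by exact_mod_cast Fintype.one_lt_card

lemma Kabs_of_ne_zero {f : Kt Fq} (hf : f ≠ 0) :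
    Kabs Fq f = (Fintype.card Fq : ℝ) ^ (-f.order) := if_neg hf

@[simp]
lemma Kabs_zero : Kabs Fq 0 = 0 := if_pos rfl

@[simp]
lemma Kabs_one : Kabs Fq 1 = 1 := by
  simp [Kabs_of_ne_zero Fq one_ne_zero]

lemma Kabs_pos {f : Kt Fq} (hf : f ≠ 0) : 0 < Kabs Fq f := by
  rw [Kabs_of_ne_zero Fq hf]
  exact zpow_pos (by positivity) _

lemma Kabs_nonneg (f : Kt Fq) : 0 ≤ Kabs Fq f := by
  rcases eq_or_ne f 0 with rfl | hf
  · exact (Kabs_zero Fq).ge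
  · exact (Kabs_pos Fq hf).le

lemma Kabs_mul (a b : Kt Fq) : Kabs Fq (a * b) = Kabs Fq a * Kabs Fq b := by
  rcases eq_or_ne a 0 with rfl | ha
  · simp
  rcases eq_or_ne b 0 with rfl | hb
  · simp
  rw [Kabs_of_ne_zero Fq ha, Kabs_of_ne_zero Fq hb, Kabs_of_ne_zero Fq (mul_ne_zero ha hb),
    HahnSeries.order_mul ha hb, neg_add, zpow_add₀ (Nat.cast_ne_zero.2 Fintype.card_ne_zero)]

lemma Kabs_add_le (a b : Kt Fq) : Kabs Fq (a + b) ≤ max (Kabs Fq a) (Kabs Fq b) := by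
  rcases eq_or_ne (a + b) 0 with hab | hab
  · rw [hab, Kabs_zero]
    exact le_max_of_le_left (Kabs_nonneg Fq a)
  rcases eq_or_ne a 0 with rfl | ha
  · simp
  rcases eq_or_ne b 0 with rfl | hb
  · simp
  have hmin := HahnSeries.min_order_le_order_add hab
  have hq := (one_lt_card_real Fq).le
  rw [Kabs_of_ne_zero Fq ha, Kabs_of_ne_zero Fq hb, Kabs_of_ne_zero Fq hab]
  rcases le_total a.order b.order with h | h
  · exact le_max_of_le_left (zpow_le_zpow_right₀ hq (by simp only [min_eq_left h] at hmin; omega))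
  · exact le_max_of_le_right (zpow_le_zpow_right₀ hq (by simp only [min_eq_right h] at hmin; omega))

lemma Kabs_sum_le {ι : Type*} (s : Finset ι) (f : ι → Kt Fq) {B : ℝ} (hB : 0 ≤ B)
    (h : ∀ i ∈ s, Kabs Fq (f i) ≤ B) : Kabs Fq (∑ i ∈ s, f i) ≤ B := by
  induction s using Finset.induction_on with
  | empty => simpa using hB
  | insert a s ha ih =>
    rw [Finset.sum_insert ha]
    exact (Kabs_add_le Fq _ _).trans (max_le (h a (Finset.mem_insert_self a s))
      (ih fun i hi => h i (Finset.mem_insert_of_mem hi)))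

lemma Kabs_lt_one_of_coeff_nonpos_eq_zero {f : Kt Fq} (h : ∀ m : ℤ, m ≤ 0 → f.coeff m = 0) :
    Kabs Fq f < 1 := by
  rcases eq_or_ne f 0 with rfl | hf
  · simp
  have hord : 0 < f.order := by
    by_contra! hle
    exact hf (HahnSeries.coeff_order_eq_zero.1 (h _ hle))
  rw [Kabs_of_ne_zero Fq hf]
  exact zpow_lt_one_of_neg₀ (one_lt_card_real Fq) (by omega)

lemma Kabs_le_inv_card_mul_of_lt {a b : Kt Fq} (h : Kabs Fq a < Kabs Fq b) :
    Kabs Fq a ≤ (Fintype.card Fq : ℝ)⁻¹ * Kabs Fq b := by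
  have hb : b ≠ 0 := by
    rintro rfl
    exact (Kabs_nonneg Fq a).not_gt (by simpa using h)
  rcases eq_or_ne a 0 with rfl | ha
  · rw [Kabs_zero]
    exact mul_nonneg (by positivity) (Kabs_nonneg Fq b)
  have hq := one_lt_card_real Fq
  rw [Kabs_of_ne_zero Fq ha, Kabs_of_ne_zero Fq hb] at h ⊢
  have hlt := (zpow_lt_zpow_iff_right₀ hq).1 h
  calc (Fintype.card Fq : ℝ) ^ (-a.order) ≤ (Fintype.card Fq : ℝ) ^ (-1 + -b.order) :=
        zpow_le_zpow_right₀ hq.le (by omega)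
    _ = _ := by rw [zpow_add₀ (zero_lt_one.trans hq).ne', zpow_neg_one]

lemma Kabs_le_inv_card_of_lt_one {a : Kt Fq} (h : Kabs Fq a < 1) :
    Kabs Fq a ≤ (Fintype.card Fq : ℝ)⁻¹ := by
  simpa using Kabs_le_inv_card_mul_of_lt Fq (b := 1) (by simpa using h)

section vnorm

variable {d : ℕ}

lemma Kabs_le_vnorm (v : Fin d → Kt Fq) (i : Fin d) : Kabs Fq (v i) ≤ vnorm Fq v :=
  le_ciSup (f := fun j => Kabs Fq (v j)) (Set.finite_range _).bddAbove i

lemma vnorm_nonneg (v : Fin d → Kt Fq) : 0 ≤ vnorm Fq v :=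
  Real.iSup_nonneg fun i => Kabs_nonneg Fq (v i)

lemma vnorm_le {v : Fin d → Kt Fq} {B : ℝ} (hB : 0 ≤ B) (h : ∀ i, Kabs Fq (v i) ≤ B) :
    vnorm Fq v ≤ B :=
  Real.iSup_le h hB

lemma vnorm_pos {v : Fin d → Kt Fq} (hv : v ≠ 0) : 0 < vnorm Fq v := by
  obtain ⟨i, hi⟩ := Function.ne_iff.1 hv
  exact (Kabs_pos Fq hi).trans_le (Kabs_le_vnorm Fq v i)

lemma exists_vnorm_eq_Kabs [Nonempty (Fin d)] (v : Fin d → Kt Fq) :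
    ∃ i, vnorm Fq v = Kabs Fq (v i) := by
  obtain ⟨i, -, hi⟩ := Finset.univ.exists_max_image (fun i => Kabs Fq (v i)) Finset.univ_nonempty
  exact ⟨i, (vnorm_le Fq (Kabs_nonneg Fq _) fun j => hi j (Finset.mem_univ j)).antisymm
    (Kabs_le_vnorm Fq v i)⟩

lemma vnorm_smul_le (a : Kt Fq) (v : Fin d → Kt Fq) :
    vnorm Fq (a • v) ≤ Kabs Fq a * vnorm Fq v :=
  vnorm_le Fq (mul_nonneg (Kabs_nonneg Fq a) (vnorm_nonneg Fq v)) fun i => by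
    rw [Pi.smul_apply, smul_eq_mul, Kabs_mul]
    exact mul_le_mul_of_nonneg_left (Kabs_le_vnorm Fq v i) (Kabs_nonneg Fq a)

lemma vnorm_sum_le {ι : Type*} (s : Finset ι) (f : ι → Fin d → Kt Fq) {B : ℝ} (hB : 0 ≤ B)
    (h : ∀ i ∈ s, vnorm Fq (f i) ≤ B) : vnorm Fq (∑ i ∈ s, f i) ≤ B :=
  vnorm_le Fq hB fun j => by
    rw [Finset.sum_apply]
    exact Kabs_sum_le Fq s _ hB fun i hi => (Kabs_le_vnorm Fq (f i) j).trans (h i hi)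

lemma vnorm_le_inv_card_mul_of_lt {u w : Fin d → Kt Fq} (h : vnorm Fq u < vnorm Fq w) :
    vnorm Fq u ≤ (Fintype.card Fq : ℝ)⁻¹ * vnorm Fq w := by
  cases isEmpty_or_nonempty (Fin d)
  · simp [vnorm, Real.iSup_of_isEmpty] at h
  obtain ⟨i, hi⟩ := exists_vnorm_eq_Kabs Fq u
  obtain ⟨j, hj⟩ := exists_vnorm_eq_Kabs Fq w
  rw [hi, hj] at h ⊢
  exact Kabs_le_inv_card_mul_of_lt Fq h

lemma vnorm_sum_smul_le_inv_card_mul {ι : Type*} (s : Finset ι) (ε : ι → Kt Fq)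
    (v : ι → Fin d → Kt Fq) {L : ℝ} (hL : 0 ≤ L) (hε : ∀ i ∈ s, Kabs Fq (ε i) < 1)
    (hv : ∀ i ∈ s, ε i ≠ 0 → vnorm Fq (v i) ≤ L) :
    vnorm Fq (∑ i ∈ s, ε i • v i) ≤ (Fintype.card Fq : ℝ)⁻¹ * L :=
  vnorm_sum_le Fq s _ (by positivity) fun i hi => by
    refine (vnorm_smul_le Fq _ _).trans ?_
    rcases eq_or_ne (ε i) 0 with h | h
    · simpa [h] using by positivity
    · exact mul_le_mul (Kabs_le_inv_card_of_lt_one Fq (hε i hi)) (hv i hi h)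
        (vnorm_nonneg Fq _) (by positivity)

end vnorm

omit [Fintype Fq] in
lemma polyK_C_mul_X_pow (a : Fq) (n : ℕ) :
    polyK Fq (Polynomial.C a * Polynomial.X ^ n) = HahnSeries.single (-(n : ℤ)) a := by
  have hC : algebraMap Fq (Kt Fq) a = HahnSeries.single 0 a := by
    rw [LaurentSeries.algebraMap_apply, HahnSeries.C_apply]
  simp [polyK, Kx, HahnSeries.single_pow, hC, HahnSeries.single_mul_single]

lemma exists_Kabs_sub_polyK_lt_one (f : Kt Fq) :
    ∃ p : Polynomial Fq, Kabs Fq (f - polyK Fq p) < 1 := by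
  set N := (-f.order).toNat + 1
  refine ⟨∑ n ∈ Finset.range N, Polynomial.C (f.coeff (-n)) * Polynomial.X ^ n,
    Kabs_lt_one_of_coeff_nonpos_eq_zero Fq fun m hm => ?_⟩
  obtain ⟨n, rfl⟩ : ∃ n : ℕ, m = -n := ⟨(-m).toNat, by omega⟩
  simp only [map_sum, polyK_C_mul_X_pow, HahnSeries.coeff_sub, HahnSeries.coeff_sum,
    HahnSeries.coeff_single, neg_inj, Nat.cast_inj, Finset.sum_ite_eq, Finset.mem_range]
  split_ifs with hn
  · exact sub_self _
  · rw [sub_zero]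
    exact HahnSeries.coeff_eq_zero_of_lt_order (by omega)

lemma exists_basis_coe_eq {K : Type*} [Field K] {d : ℕ} {v : Fin d → Fin d → K}
    (hv : LinearIndependent K v) : ∃ B : Module.Basis (Fin d) K (Fin d → K), ⇑B = v :=
  ⟨basisOfLinearIndependentOfCardEqFinrank' v hv (by simp),
    coe_basisOfLinearIndependentOfCardEqFinrank' v hv _⟩

lemma linearIndependent_finSnoc_sum_smul {K V : Type*} [Field K] [AddCommGroup V] [Module K V]
    {d m : ℕ} (B : Module.Basis (Fin d) K V) (hm : m ≤ d) {ε : Fin d → K} {k : Fin d}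
    (hk : ε k ≠ 0) (hmk : m ≤ k) :
    LinearIndependent K (Fin.snoc (⇑B ∘ Fin.castLE hm) (∑ i, ε i • B i)) := by
  refine linearIndependent_finSnoc.2 ⟨B.linearIndependent.comp _ (Fin.castLE_injective hm), ?_⟩
  rw [Set.range_comp, Fin.range_castLE, B.mem_span_image]
  intro hsupp
  have hkm : k ∈ {i : Fin d | (i : ℕ) < m} := hsupp <| by
    rwa [Finset.mem_coe, Finsupp.mem_support_iff, B.repr_sum_self ε]
  exact hmk.not_gt hkm

section lattice

variable {d : ℕ} (g : Matrix (Fin d) (Fin d) (Kt Fq))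

omit [Fintype Fq] in
lemma sum_smul_mem_lattice {ι : Type*} [Fintype ι] {v : ι → Fin d → Kt Fq}
    (hv : ∀ i, v i ∈ lattice Fq g) (c : ι → Polynomial Fq) :
    ∑ i, polyK Fq (c i) • v i ∈ lattice Fq g := by
  choose b hb using hv
  refine ⟨∑ i, c i • b i, ?_⟩
  have hcoord : (fun j => polyK Fq ((∑ i, c i • b i) j))
      = ∑ i, polyK Fq (c i) • fun j => polyK Fq (b i j) := by
    funext j
    simp [Finset.sum_apply]
  simp only [hcoord, Matrix.mulVec_sum, Matrix.mulVec_smul, ← hb]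

omit [Fintype Fq] in
lemma sub_mem_lattice {u w : Fin d → Kt Fq} (hu : u ∈ lattice Fq g) (hw : w ∈ lattice Fq g) :
    u - w ∈ lattice Fq g := by
  obtain ⟨a, rfl⟩ := hu
  obtain ⟨b, rfl⟩ := hw
  refine ⟨a - b, ?_⟩
  rw [← Matrix.mulVec_sub]
  congr 1
  funext j
  simp

end lattice

lemma minima_le {d n : ℕ} {Λ : Set (Fin d → Kt Fq)} {r : ℝ} (hr : 0 < r)
    (u : Fin n → Fin d → Kt Fq) (hmem : ∀ j, u j ∈ Λ) (hind : LinearIndependent (Kt Fq) u)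
    (hle : ∀ j, vnorm Fq (u j) ≤ r) : minima Fq Λ n ≤ r :=
  csInf_le ⟨0, fun _ hs => hs.1.le⟩ ⟨hr, u, hmem, hind, hle⟩

lemma eq_zero_of_sum_smul_mem {d : ℕ} {Λ : Set (Fin d → Kt Fq)}
    (B : Module.Basis (Fin d) (Kt Fq) (Fin d → Kt Fq)) (hBmem : ∀ i, B i ∈ Λ)
    (hmin : ∀ i : Fin d, vnorm Fq (B i) = minima Fq Λ ((i : ℕ) + 1))
    {ε : Fin d → Kt Fq} (hε : ∀ i, Kabs Fq (ε i) < 1) (hmem : ∑ i, ε i • B i ∈ Λ) : ε = 0 := by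
  by_contra hne
  obtain ⟨i₀, hi₀⟩ := Function.ne_iff.1 hne
  set q : ℝ := (Fintype.card Fq : ℝ)
  set w := ∑ i, ε i • B i
  obtain ⟨k, hk, hkmax⟩ := (Finset.univ.filter (ε · ≠ 0)).exists_max_image (vnorm Fq ∘ ⇑B)
    ⟨i₀, by simpa using hi₀⟩
  set L := vnorm Fq (B k)
  have hLpos : 0 < L := vnorm_pos Fq (B.ne_zero k)
  have hw : vnorm Fq w ≤ q⁻¹ * L := vnorm_sum_smul_le_inv_card_mul Fq _ ε B hLpos.le
    (fun i _ => hε i) fun i _ h => hkmax i (by simpa using h)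
  set S := Finset.univ.filter fun i => L ≤ vnorm Fq (B i)
  have hkS : k ∈ S := by simp [S, L]
  set m := S.min' ⟨k, hkS⟩
  have hmS : L ≤ vnorm Fq (B m) := by simpa [S] using S.min'_mem ⟨k, hkS⟩
  have hshort (j : Fin d) (hj : j < m) : vnorm Fq (B j) ≤ q⁻¹ * L :=
    vnorm_le_inv_card_mul_of_lt Fq <| lt_of_not_ge fun h =>
      (S.min'_le j (by simpa [S] using h)).not_gt hj
  let u : Fin (m + 1) → Fin d → Kt Fq := Fin.snoc (⇑B ∘ Fin.castLE m.is_lt.le) w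
  have hle : minima Fq Λ (m + 1) ≤ q⁻¹ * L := minima_le Fq (by positivity) u
    (Fin.lastCases (by simpa [u] using hmem) fun j => by simpa [u] using hBmem _)
    (linearIndependent_finSnoc_sum_smul B m.is_lt.le (by simpa using hk) (S.min'_le k hkS))
    (Fin.lastCases (by simpa [u] using hw) fun j => by simpa [u] using hshort _ j.is_lt)
  have hqL : q⁻¹ * L < L :=
    mul_lt_of_lt_one_left hLpos (inv_lt_one_of_one_lt₀ (one_lt_card_real Fq))
  linarith [hmin m]

theorem successive_minima_vectors_span {d : ℕ}
    (g : Matrix (Fin d) (Fin d) (Kt Fq))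
    (v : Fin d → Fin d → Kt Fq)
    (hvmem : ∀ i, v i ∈ lattice Fq g)
    (hind : LinearIndependent (Kt Fq) v)
    (hmin : ∀ i : Fin d, vnorm Fq (v i) = minima Fq (lattice Fq g) ((i : ℕ) + 1)) :
    lattice Fq g = {w | ∃ c : Fin d → Polynomial Fq, w = ∑ i, polyK Fq (c i) • v i} := by
  ext w
  refine ⟨fun hw => ?_, by rintro ⟨c, rfl⟩; exact sum_smul_mem_lattice Fq g hvmem c⟩
  obtain ⟨B, rfl⟩ := exists_basis_coe_eq hind
  set c := B.equivFun w
  have hc : w = ∑ i, c i • B i := B.sum_equivFun w |>.symm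
  choose p hp using fun i => exists_Kabs_sub_polyK_lt_one Fq (c i)
  have hfrac : ∑ i, (c i - polyK Fq (p i)) • B i = w - ∑ i, polyK Fq (p i) • B i := by
    simp [sub_smul, Finset.sum_sub_distrib, hc]
  have hzero := eq_zero_of_sum_smul_mem Fq B hvmem hmin hp
    (hfrac ▸ sub_mem_lattice Fq g hw (sum_smul_mem_lattice Fq g hvmem p))
  refine ⟨p, hc.trans (Finset.sum_congr rfl fun i _ => ?_)⟩
  rw [sub_eq_zero.1 (congr_fun hzero i)]
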